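/- Let Γ = (F_2 × ℤ) * ℤ be the free product of F_2 × ℤ with ℤ, where F_2 is the free group on two generators a_1, a_2. Write a_1, a_2 for the images in Γ of the generators of F_2 (included via the first factor), b for the image in Γ of the generator 1 of the ℤ-factor of F_2 × ℤ, and c for the image in Γ of the generator 1 of the second free factor ℤ. Let w = [[a_1, a_2], [b, c]]. Then w ≠ 1 in Γ, yet every group homomorphism φ : Γ → SL_2(ℂ) satisfies φ(w) = 1. In particular, Γ is not residually {SL_2(ℂ)}. -/

import Mathlib

/-- The group `Γ = (F₂ × ℤ) * ℤ`. -/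
abbrev GammaFP : Type :=
  Monoid.Coprod (FreeGroup (Fin 2) × Multiplicative ℤ) (Multiplicative ℤ)

/-- `a₁`, the image in `Γ` of the first generator of `F₂`. -/
def fpA1 : GammaFP := Monoid.Coprod.inl (FreeGroup.of 0, 1)

/-- `a₂`, the image in `Γ` of the second generator of `F₂`. -/
def fpA2 : GammaFP := Monoid.Coprod.inl (FreeGroup.of 1, 1)

/-- `b`, the image in `Γ` of the generator of the `ℤ`-factor of `F₂ × ℤ`. -/
def fpB : GammaFP := Monoid.Coprod.inl (1, Multiplicative.ofAdd 1)

/-- `c`, the image in `Γ` of the generator of the second free factor `ℤ`. -/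
def fpC : GammaFP := Monoid.Coprod.inr (Multiplicative.ofAdd 1)

open scoped commutatorElement

/-!
If `φ(b)` is a scalar matrix, it commutes with `φ(c)` and `φ[b, c] = 1`. Otherwise the
centralizer of `φ(b)` in `M₂(K)` is the commutative algebra `K[φ(b)]`; since `a₁` and `a₂`
commute with `b`, this gives `φ[a₁, a₂] = 1`. Either way `φ(w) = 1`.

The word `w` is nontrivial because it survives in a finite quotient: send `F₂ × ℤ` to
`S₃ × S₂ ⊆ Perm (Fin 3 ⊕ Fin 2)` and `c` to a transposition joining the two blocks.
-/

namespace Matrix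

variable {K : Type*} [Field K]

/-- Coordinates of a `2 × 2` matrix modulo scalars: they vanish exactly on scalar matrices,
and the cross product of those of `A` and `B` lists the entries of `A * B - B * A`. -/
def nonscalarPart (M : Matrix (Fin 2) (Fin 2) K) : Fin 3 → K :=
  ![M 0 0 - M 1 1, M 0 1, M 1 0]

lemma mem_range_scalar_of_nonscalarPart_eq_zero {M : Matrix (Fin 2) (Fin 2) K}
    (h : nonscalarPart M = 0) : M ∈ Set.range (scalar (Fin 2)) := by
  simp only [nonscalarPart, cons_eq_zero_iff, sub_eq_zero] at h
  refine ⟨M 1 1, ?_⟩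
  ext i j
  fin_cases i <;> fin_cases j <;> simp [h]

lemma nonscalarPart_sub_smul (A B : Matrix (Fin 2) (Fin 2) K) (β : K) :
    nonscalarPart (A - β • B) = nonscalarPart A - β • nonscalarPart B := by
  ext i
  fin_cases i <;> simp [nonscalarPart, mul_sub, sub_sub_sub_comm]

lemma cross_nonscalarPart_eq_zero_of_commute {A B : Matrix (Fin 2) (Fin 2) K}
    (h : Commute A B) : nonscalarPart A ⨯₃ nonscalarPart B = 0 := by
  have hij : ∀ i j, (A * B) i j = (B * A) i j := fun i j => by rw [h.eq]
  have h00 := hij 0 0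
  have h01 := hij 0 1
  have h10 := hij 1 0
  simp only [mul_apply, Fin.sum_univ_two] at h00 h01 h10
  simp only [nonscalarPart, cross_apply, cons_val_zero, cons_val_one, cons_val_two, tail_cons,
    head_cons, cons_eq_zero_iff, zero_empty, and_true]
  exact ⟨by linear_combination h00, by linear_combination h10, by linear_combination h01⟩

lemma exists_eq_scalar_add_smul_of_commute {A B : Matrix (Fin 2) (Fin 2) K}
    (hB : B ∉ Set.range (scalar (Fin 2))) (h : Commute A B) :
    ∃ α β : K, A = scalar (Fin 2) α + β • B := by
  have hB' : nonscalarPart B ≠ 0 := mt mem_range_scalar_of_nonscalarPart_eq_zero hB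
  obtain ⟨β, hβ⟩ : ∃ β : K, β • nonscalarPart B = nonscalarPart A := by
    by_contra! hne
    exact crossProduct_ne_zero_iff_linearIndependent.mpr
      ((LinearIndependent.pair_iff' hB').mpr hne) (cross_nonscalarPart_eq_zero_of_commute h.symm)
  obtain ⟨α, hα⟩ := mem_range_scalar_of_nonscalarPart_eq_zero (M := A - β • B)
    (by rw [nonscalarPart_sub_smul, hβ, sub_self])
  exact ⟨α, β, eq_add_of_sub_eq hα.symm⟩

theorem commute_of_commute_of_notMem_range_scalar {A₁ A₂ B : Matrix (Fin 2) (Fin 2) K}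
    (hB : B ∉ Set.range (scalar (Fin 2))) (h₁ : Commute A₁ B) (h₂ : Commute A₂ B) :
    Commute A₁ A₂ := by
  obtain ⟨α, β, rfl⟩ := exists_eq_scalar_add_smul_of_commute hB h₁
  exact (scalar_commute α (Commute.all α) A₂).add_left (h₂.symm.smul_left β)

end Matrix

namespace Matrix.SpecialLinearGroup

variable {K : Type*} [Field K]

theorem commutatorElement_commutatorElement_eq_one {a₁ a₂ b : SpecialLinearGroup (Fin 2) K}
    (c : SpecialLinearGroup (Fin 2) K) (h₁ : Commute a₁ b) (h₂ : Commute a₂ b) :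
    ⁅⁅a₁, a₂⁆, ⁅b, c⁆⁆ = 1 := by
  by_cases hb : (b : Matrix (Fin 2) (Fin 2) K) ∈ Set.range (scalar (Fin 2))
  · obtain ⟨r, hr⟩ := hb
    have hbc : Commute b c := by
      rw [← commute_map_iff coeMonoidHom_injective, coeMonoidHom_apply, ← hr]
      exact scalar_commute r (Commute.all r) _
    rw [commutatorElement_eq_one_iff_commute.mpr hbc, commutatorElement_one_right]
  · have h : Commute a₁ a₂ := by
      rw [← commute_map_iff coeMonoidHom_injective]
      exact commute_of_commute_of_notMem_range_scalar hb
        (h₁.map coeMonoidHom) (h₂.map coeMonoidHom)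
    rw [commutatorElement_eq_one_iff_commute.mpr h, commutatorElement_one_left]

end Matrix.SpecialLinearGroup

def fpW : GammaFP := ⁅⁅fpA1, fpA2⁆, ⁅fpB, fpC⁆⁆

lemma commute_inl_fpB (x : FreeGroup (Fin 2)) :
    Commute (Monoid.Coprod.inl (x, 1) : GammaFP) fpB :=
  (Commute.prod (Commute.one_right x) (Commute.one_left _)).map Monoid.Coprod.inl

theorem map_fpW_eq_one {K : Type*} [Field K]
    (φ : GammaFP →* Matrix.SpecialLinearGroup (Fin 2) K) : φ fpW = 1 := by
  simp only [fpW, map_commutatorElement]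
  exact Matrix.SpecialLinearGroup.commutatorElement_commutatorElement_eq_one _
    ((commute_inl_fpB _).map φ) ((commute_inl_fpB _).map φ)

open Equiv in
def permRep : GammaFP →* Perm (Fin 3 ⊕ Fin 2) :=
  Monoid.Coprod.lift
    ((Perm.sumCongrHom (Fin 3) (Fin 2)).comp
      (MonoidHom.prodMap (FreeGroup.lift ![swap 0 1, swap 1 2]) (zpowersHom _ (swap 0 1))))
    (zpowersHom _ (swap (Sum.inl 2) (Sum.inr 0)))

/-- `[a₁, a₂]` maps to a 3-cycle on `inl 0, inl 1, inl 2` and `[b, c]` to one on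
`inl 2, inr 0, inr 1`; two 3-cycles sharing exactly one point do not commute. -/
lemma permRep_fpW_ne_one : permRep fpW ≠ 1 := by
  decide

lemma fpW_ne_one : fpW ≠ 1 :=
  fun h => permRep_fpW_ne_one (by rw [h, map_one])

/-- In `Γ = (F₂ × ℤ) * ℤ`, the element `w = [[a₁,a₂],[b,c]]` is nontrivial but is killed
by every homomorphism to `SL_2(ℂ)`; in particular `Γ` is not residually `{SL_2(ℂ)}`. -/
theorem freeProduct_not_residually_SL2 :
    ⁅⁅fpA1, fpA2⁆, ⁅fpB, fpC⁆⁆ ≠ 1 ∧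
    (∀ φ : GammaFP →* Matrix.SpecialLinearGroup (Fin 2) ℂ,
      φ ⁅⁅fpA1, fpA2⁆, ⁅fpB, fpC⁆⁆ = 1) ∧
    ¬ (∀ γ : GammaFP, γ ≠ 1 →
        ∃ φ : GammaFP →* Matrix.SpecialLinearGroup (Fin 2) ℂ, φ γ ≠ 1) := by
  refine ⟨fpW_ne_one, map_fpW_eq_one, fun hres => ?_⟩
  obtain ⟨φ, hφ⟩ := hres fpW fpW_ne_one
  exact hφ (map_fpW_eq_one φ)
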